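/- If π, π' ∈ S_n satisfy π' = p_i(π) = swap_i(π) ≠ π for some i ∈ [n-1], then p_i restricts to a bijection from s⁻¹(π) to s⁻¹(π'); in particular |s⁻¹(π)| = |s⁻¹(π')|. -/

import Mathlib

/-- `l` is a permutation of `{1, …, n}`, written as a word. -/
def IsPermList (n : ℕ) (l : List ℕ) : Prop := l.Perm (List.range' 1 n)

/-- The word obtained from `l` by exchanging the positions of the entries `i` and `i+1`. -/
def swapEntries (i : ℕ) (l : List ℕ) : List ℕ :=
  l.map fun x => if x = i then i + 1 else if x = i + 1 then i else x

/-- Some entry larger than `i+1` appears (strictly) between the entries `i` and `i+1`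
in the word `l`. -/
def ToggleApplies (i : ℕ) (l : List ℕ) : Prop :=
  ∃ a ∈ l, i + 1 < a ∧
    min (l.idxOf i) (l.idxOf (i + 1)) < l.idxOf a ∧
    l.idxOf a < max (l.idxOf i) (l.idxOf (i + 1))

open scoped Classical in
/-- The polyurethane toggle `p i`. -/
noncomputable def toggle (i : ℕ) (l : List ℕ) : List ℕ :=
  if ToggleApplies i l then swapEntries i l else l

lemma max_getD_mem (l : List ℕ) (h : l ≠ []) : l.max?.getD 0 ∈ l := by
  rcases hm : l.max? with _ | m'
  · exact absurd (List.max?_eq_none_iff.mp hm) h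
  · simpa using List.max?_mem hm

lemma length_takeWhile_lt (p : ℕ → Bool) (l : List ℕ) (x : ℕ) (hx : x ∈ l) (hpx : p x = false) :
    (l.takeWhile p).length < l.length := by
  rcases Nat.lt_or_ge (l.takeWhile p).length l.length with h | h
  · exact h
  · have := List.takeWhile_eq_self_iff.mp ((List.takeWhile_sublist p).eq_of_length_le h) x hx
    rw [hpx] at this; exact absurd this (by simp)

lemma length_dropWhile_tail_lt (p : ℕ → Bool) (l : List ℕ) (h : l ≠ []) :
    ((l.dropWhile p).tail).length < l.length := by
  have h1 : (l.dropWhile p).length ≤ l.length := (List.dropWhile_sublist _).length_le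
  have h2 : ((l.dropWhile p).tail).length ≤ (l.dropWhile p).length - 1 := by
    simp [List.length_tail]
  have : 0 < l.length := List.length_pos_iff.mpr h
  omega

/-- West's stack-sorting map `s`: `s([]) = []` and `s(LmR) = s(L) s(R) m`,
where `m` is the largest entry. -/
def stackSort : List ℕ → List ℕ
  | [] => []
  | a :: rest =>
    stackSort ((a :: rest).takeWhile (· ≠ (a :: rest).max?.getD 0)) ++
      stackSort (((a :: rest).dropWhile (· ≠ (a :: rest).max?.getD 0)).tail) ++
      [(a :: rest).max?.getD 0]
termination_by l => l.length
decreasing_by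
  · exact length_takeWhile_lt _ _ _ (max_getD_mem (a :: rest) (by simp)) (by simp)
  · exact length_dropWhile_tail_lt _ _ (by simp)

/-!
Write a word σ without repeated entries as `L m R` with `m` its largest entry, so that
`s(σ) = s(L) s(R) m`. If an entry larger than `i + 1` separates `i` and `i + 1` in `s(σ)`, then
`m > i + 1`, and either `i` and `i + 1` lie on the same side of `m`, where induction applies, or on
opposite sides, where `m` itself separates them in `σ`. Exchanging `i` and `i + 1` in a word that
contains at most one of them preserves the relative order of its entries, so it commutes with `s`.
Therefore `s(swap_i σ) = swap_i(s σ)` for every `σ ∈ s⁻¹(π)`, on which `p_i` acts as the involution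
`swap_i`.
-/

open List

lemma swapEntries_eq_map (i : ℕ) (l : List ℕ) :
    swapEntries i l = l.map (Equiv.swap i (i + 1)) :=
  map_congr_left fun x _ => (Equiv.swap_apply_def i (i + 1) x).symm

lemma swapEntries_swapEntries (i : ℕ) (l : List ℕ) : swapEntries i (swapEntries i l) = l := by
  simp [swapEntries_eq_map, Function.comp_def]

lemma List.idxOf_map_of_injective {α β : Type*} [DecidableEq α] [DecidableEq β] {f : α → β}
    (hf : f.Injective) (l : List α) (x : α) : (l.map f).idxOf (f x) = l.idxOf x := by
  induction l with
  | nil => rfl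
  | cons a l ih =>
    have : (f a == f x) = (a == x) := by simp [hf.eq_iff]
    rw [map_cons, idxOf_cons, idxOf_cons, ih, this]

lemma idxOf_swapEntries (i : ℕ) (l : List ℕ) (x : ℕ) :
    (swapEntries i l).idxOf x = l.idxOf (Equiv.swap i (i + 1) x) := by
  conv_lhs => rw [← Equiv.swap_apply_self i (i + 1) x]
  rw [swapEntries_eq_map, idxOf_map_of_injective (Equiv.injective _)]

lemma ToggleApplies.swapEntries {i : ℕ} {l : List ℕ} (h : ToggleApplies i l) :
    ToggleApplies i (swapEntries i l) := by
  obtain ⟨a, ha, hia, hlt, hgt⟩ := h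
  have hfix : Equiv.swap i (i + 1) a = a := Equiv.swap_apply_of_ne_of_ne (by omega) (by omega)
  refine ⟨a, ?_, hia, ?_, ?_⟩
  · rw [swapEntries_eq_map, ← hfix]
    exact mem_map_of_mem ha
  all_goals
    simp only [idxOf_swapEntries, Equiv.swap_apply_left, Equiv.swap_apply_right, hfix]
    omega

lemma toggle_of_toggleApplies {i : ℕ} {l : List ℕ} (h : ToggleApplies i l) :
    toggle i l = swapEntries i l :=
  if_pos h

lemma toggle_toggle_of_toggleApplies {i : ℕ} {l : List ℕ} (h : ToggleApplies i l) :
    toggle i (toggle i l) = l := by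
  rw [toggle_of_toggleApplies h, toggle_of_toggleApplies h.swapEntries, swapEntries_swapEntries]

lemma List.Nodup.map_swap_perm {α : Type*} [DecidableEq α] {l : List α} {a b : α}
    (hl : l.Nodup) (ha : a ∈ l) (hb : b ∈ l) : (l.map (Equiv.swap a b)).Perm l := by
  refine (perm_ext_iff_of_nodup (hl.map (Equiv.injective _)) hl).2 fun x => ?_
  rw [mem_map_of_involutive (Equiv.swap_apply_self a b)]
  rcases eq_or_ne x a with rfl | hxa
  · simp [ha, hb]
  rcases eq_or_ne x b with rfl | hxb
  · simp [ha, hb]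
  rw [Equiv.swap_apply_of_ne_of_ne hxa hxb]

lemma IsPermList.swapEntries {n i : ℕ} {l : List ℕ} (hl : IsPermList n l)
    (hi : i ∈ range' 1 n) (hi1 : i + 1 ∈ range' 1 n) :
    IsPermList n (swapEntries i l) := by
  rw [swapEntries_eq_map]
  exact (hl.map _).trans ((nodup_range' (s := 1) (n := n)).map_swap_perm hi hi1)

lemma stackSort_append_cons {L R : List ℕ} {m : ℕ} (hL : ∀ x ∈ L, x < m) (hR : ∀ x ∈ R, x < m) :
    stackSort (L ++ m :: R) = stackSort L ++ stackSort R ++ [m] := by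
  have hmax : (L ++ m :: R).max? = some m := by
    refine max?_eq_some_iff.2 ⟨by simp, fun x hx => ?_⟩
    simp only [mem_append, mem_cons] at hx
    rcases hx with hx | rfl | hx
    exacts [(hL x hx).le, le_rfl, (hR x hx).le]
  have hne : ∀ x ∈ L, decide (x ≠ m) = true := fun x hx => by simpa using (hL x hx).ne
  obtain ⟨a, rest, hcons⟩ : ∃ a rest, L ++ m :: R = a :: rest :=
    ne_nil_iff_exists_cons.1 (by simp)
  rw [hcons, stackSort, ← hcons, hmax, Option.getD_some, takeWhile_append_of_pos hne,
    dropWhile_append_of_pos hne]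
  simp

lemma exists_eq_append_cons_of_nodup {l : List ℕ} (hl : l.Nodup) (hne : l ≠ []) :
    ∃ L m R, l = L ++ m :: R ∧ (∀ x ∈ L, x < m) ∧ ∀ x ∈ R, x < m := by
  obtain ⟨m, hm⟩ := Option.isSome_iff_exists.1 (isSome_max?_of_ne_nil hne)
  obtain ⟨hml, hle⟩ := max?_eq_some_iff.1 hm
  obtain ⟨L, R, rfl⟩ := append_of_mem hml
  have hnd := nodup_append.1 hl
  refine ⟨L, m, R, rfl, fun x hx => ?_, fun x hx => ?_⟩
  · exact (hle x (by simp [hx])).lt_of_ne (hnd.2.2 x hx m (by simp))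
  · exact (hle x (by simp [hx])).lt_of_ne (by rintro rfl; exact (nodup_cons.1 hnd.2.1).1 hx)

@[elab_as_elim]
theorem List.Nodup.induction_on_max {P : List ℕ → Prop} {l : List ℕ} (hl : l.Nodup) (nil : P [])
    (append_cons : ∀ L m R, (L ++ m :: R).Nodup → (∀ x ∈ L, x < m) → (∀ x ∈ R, x < m) →
      P L → P R → P (L ++ m :: R)) : P l := by
  rcases eq_or_ne l [] with rfl | hne
  · exact nil
  obtain ⟨L, m, R, rfl, hL, hR⟩ := exists_eq_append_cons_of_nodup hl hne
  exact append_cons L m R hl hL hR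
    ((hl.sublist (sublist_append_left L _)).induction_on_max nil append_cons)
    ((hl.sublist ((sublist_cons_self m R).trans (sublist_append_right L _))).induction_on_max
      nil append_cons)
termination_by l.length
decreasing_by all_goals subst_vars; simp only [length_append, length_cons]; omega

lemma stackSort_perm {l : List ℕ} (hl : l.Nodup) : (stackSort l).Perm l := by
  refine hl.induction_on_max (by simp [stackSort]) fun L m R _ hL hR ihL ihR => ?_
  rw [stackSort_append_cons hL hR, append_assoc]
  exact (ihL.append (ihR.append_right [m])).trans (perm_append_singleton m R |>.append_left L)

lemma stackSort_map_of_strictMonoOn {f : ℕ → ℕ} {l : List ℕ} (hl : l.Nodup)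
    (hf : StrictMonoOn f {x | x ∈ l}) : stackSort (l.map f) = (stackSort l).map f := by
  revert hf
  refine hl.induction_on_max (by simp [stackSort]) fun L m R _ hL hR ihL ihR hf => ?_
  have hsubL : {x | x ∈ L} ⊆ {x | x ∈ L ++ m :: R} := fun x hx => mem_append_left _ hx
  have hsubR : {x | x ∈ R} ⊆ {x | x ∈ L ++ m :: R} := fun x hx =>
    mem_append_right _ (mem_cons_of_mem m hx)
  have hm : m ∈ L ++ m :: R := by simp
  have hfL : ∀ y ∈ L.map f, y < f m := by
    simpa using fun x hx => hf (hsubL hx) hm (hL x hx)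
  have hfR : ∀ y ∈ R.map f, y < f m := by
    simpa using fun x hx => hf (hsubR hx) hm (hR x hx)
  rw [map_append, map_cons, stackSort_append_cons hfL hfR, stackSort_append_cons hL hR,
    ihL (hf.mono hsubL), ihR (hf.mono hsubR)]
  simp

lemma strictMonoOn_swap {i : ℕ} {s : Set ℕ} (h : ¬(i ∈ s ∧ i + 1 ∈ s)) :
    StrictMonoOn (Equiv.swap i (i + 1)) s := by
  intro x hx y hy hxy
  simp only [Equiv.swap_apply_def]
  split_ifs <;> subst_vars <;> first | omega | exact absurd ⟨hx, hy⟩ h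

lemma not_toggleApplies_of_forall_le {i : ℕ} {l : List ℕ} (h : ∀ x ∈ l, x ≤ i + 1) :
    ¬ToggleApplies i l := fun ⟨a, ha, hia, _⟩ => (h a ha).not_gt hia

lemma toggleApplies_append_left_iff {i : ℕ} {u v : List ℕ} (hi : i ∈ u) (hi1 : i + 1 ∈ u) :
    ToggleApplies i (u ++ v) ↔ ToggleApplies i u := by
  have hlen := idxOf_lt_length_iff.2 hi
  have hlen1 := idxOf_lt_length_iff.2 hi1
  simp only [ToggleApplies, idxOf_append_of_mem hi, idxOf_append_of_mem hi1]
  refine ⟨fun ⟨a, _, hia, hlt, hgt⟩ => ?_, fun ⟨a, ha, hia, hlt, hgt⟩ =>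
    ⟨a, mem_append_left v ha, hia, by rw [idxOf_append_of_mem ha]; exact ⟨hlt, hgt⟩⟩⟩
  have hau : a ∈ u := by
    by_contra hau
    rw [idxOf_append_of_notMem hau] at hgt
    omega
  rw [idxOf_append_of_mem hau] at hlt hgt
  exact ⟨a, hau, hia, hlt, hgt⟩

lemma toggleApplies_append_right_iff {i : ℕ} {u v : List ℕ} (huv : (u ++ v).Nodup)
    (hi : i ∈ v) (hi1 : i + 1 ∈ v) :
    ToggleApplies i (u ++ v) ↔ ToggleApplies i v := by
  have hdisj := disjoint_of_nodup_append huv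
  simp only [ToggleApplies, idxOf_append_of_notMem (hdisj.symm hi),
    idxOf_append_of_notMem (hdisj.symm hi1)]
  refine ⟨fun ⟨a, ha, hia, hlt, hgt⟩ => ?_, fun ⟨a, ha, hia, hlt, hgt⟩ =>
    ⟨a, mem_append_right u ha, hia, ?_⟩⟩
  · have hau : a ∉ u := fun hau => by
      rw [idxOf_append_of_mem hau] at hlt
      have := idxOf_lt_length_iff.2 hau
      omega
    rw [idxOf_append_of_notMem hau] at hlt hgt
    exact ⟨a, (mem_append.1 ha).resolve_left hau, hia, by omega, by omega⟩
  · rw [idxOf_append_of_notMem (hdisj.symm ha)]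
    omega

lemma toggleApplies_append_cons {i m : ℕ} {L R : List ℕ} (hl : (L ++ m :: R).Nodup)
    (hm : i + 1 < m) (h : i ∈ L ∧ i + 1 ∈ R ∨ i + 1 ∈ L ∧ i ∈ R) :
    ToggleApplies i (L ++ m :: R) := by
  have hdisj := disjoint_of_nodup_append hl
  have hmL : m ∉ L := fun hmL => hdisj hmL mem_cons_self
  have idx_right : ∀ x ∈ R, x ≠ m → (L ++ m :: R).idxOf x = L.length + 1 + R.idxOf x :=
    fun x hx hxm => by
      rw [idxOf_append_of_notMem fun hxL => hdisj hxL (mem_cons_of_mem m hx),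
        idxOf_cons_ne _ hxm.symm]
      omega
  refine ⟨m, by simp, hm, ?_⟩
  rw [idxOf_append_of_notMem hmL, idxOf_cons_self]
  rcases h with ⟨hL, hR⟩ | ⟨hL, hR⟩
  all_goals
    have := idxOf_lt_length_iff.2 hL
    rw [idxOf_append_of_mem hL, idx_right _ hR (by omega)]
    omega

lemma stackSort_swapEntries_of_not_both_mem {i : ℕ} {l : List ℕ} (hl : l.Nodup)
    (h : ¬(i ∈ l ∧ i + 1 ∈ l)) : stackSort (swapEntries i l) = swapEntries i (stackSort l) := by
  simpa only [swapEntries_eq_map] using stackSort_map_of_strictMonoOn hl (strictMonoOn_swap h)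

lemma forall_mem_swapEntries_lt {i m : ℕ} {l : List ℕ} (h : ∀ x ∈ l, x < m) (hm : i + 1 < m) :
    ∀ x ∈ swapEntries i l, x < m := by
  simp only [swapEntries_eq_map, mem_map, forall_exists_index, and_imp, forall_apply_eq_imp_iff₂]
  intro x hx
  have := h x hx
  rw [Equiv.swap_apply_def]
  split_ifs <;> omega

lemma swapEntries_append_cons {i m : ℕ} (L R : List ℕ) (hm : i + 1 < m) :
    swapEntries i (L ++ m :: R) = swapEntries i L ++ m :: swapEntries i R := by
  simp [swapEntries_eq_map, Equiv.swap_apply_of_ne_of_ne (show m ≠ i by omega) hm.ne']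

lemma ToggleApplies.of_stackSort_append_cons {i m : ℕ} {L R : List ℕ}
    (hl : (L ++ m :: R).Nodup) (hL : ∀ x ∈ L, x < m) (hR : ∀ x ∈ R, x < m)
    (hT : ToggleApplies i (stackSort (L ++ m :: R))) :
    i + 1 < m ∧ (i ∈ L → i + 1 ∈ L → ToggleApplies i (stackSort L)) ∧
      (i ∈ R → i + 1 ∈ R → ToggleApplies i (stackSort R)) := by
  have hperm := stackSort_perm hl
  rw [stackSort_append_cons hL hR] at hperm hT
  have hnd : (stackSort L ++ stackSort R).Nodup :=
    (hperm.nodup_iff.2 hl).sublist (sublist_append_left _ _)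
  have pL := stackSort_perm (nodup_append.1 hl).1
  have pR := stackSort_perm (nodup_append.1 hl).2.1.of_cons
  refine ⟨?_, fun hi hi1 => ?_, fun hi hi1 => ?_⟩
  · by_contra! hm
    refine not_toggleApplies_of_forall_le (fun x hx => ?_) hT
    simp only [hperm.mem_iff, mem_append, mem_cons] at hx
    rcases hx with hx | rfl | hx
    exacts [by linarith [hL x hx], hm, by linarith [hR x hx]]
  · rwa [append_assoc, toggleApplies_append_left_iff (pL.mem_iff.2 hi) (pL.mem_iff.2 hi1)] at hT
  · rwa [toggleApplies_append_left_iff (mem_append_right _ (pR.mem_iff.2 hi))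
      (mem_append_right _ (pR.mem_iff.2 hi1)), toggleApplies_append_right_iff hnd (pR.mem_iff.2 hi)
      (pR.mem_iff.2 hi1)] at hT

theorem toggleApplies_and_stackSort_swapEntries {i : ℕ} {l : List ℕ} (hl : l.Nodup)
    (hi : i ∈ l) (hi1 : i + 1 ∈ l) (hT : ToggleApplies i (stackSort l)) :
    ToggleApplies i l ∧ stackSort (swapEntries i l) = swapEntries i (stackSort l) := by
  revert hi hi1 hT
  refine hl.induction_on_max (by simp) fun L m R hl hL hR ihL ihR hi hi1 hT => ?_
  obtain ⟨hm, hTL, hTR⟩ := hT.of_stackSort_append_cons hl hL hR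
  have hndL : L.Nodup := (nodup_append.1 hl).1
  have hndR : R.Nodup := (nodup_append.1 hl).2.1.of_cons
  have commL : stackSort (swapEntries i L) = swapEntries i (stackSort L) := by
    by_cases h : i ∈ L ∧ i + 1 ∈ L
    exacts [(ihL h.1 h.2 (hTL h.1 h.2)).2, stackSort_swapEntries_of_not_both_mem hndL h]
  have commR : stackSort (swapEntries i R) = swapEntries i (stackSort R) := by
    by_cases h : i ∈ R ∧ i + 1 ∈ R
    exacts [(ihR h.1 h.2 (hTR h.1 h.2)).2, stackSort_swapEntries_of_not_both_mem hndR h]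
  refine ⟨?_, ?_⟩
  · by_cases hLb : i ∈ L ∧ i + 1 ∈ L
    · exact (toggleApplies_append_left_iff hLb.1 hLb.2).2 (ihL hLb.1 hLb.2 (hTL hLb.1 hLb.2)).1
    by_cases hRb : i ∈ R ∧ i + 1 ∈ R
    · rw [← singleton_append, ← append_assoc] at hl ⊢
      exact (toggleApplies_append_right_iff hl hRb.1 hRb.2).2 (ihR hRb.1 hRb.2 (hTR hRb.1 hRb.2)).1
    refine toggleApplies_append_cons hl hm ?_
    simp only [mem_append, mem_cons, show i ≠ m by omega, show i + 1 ≠ m by omega,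
      false_or] at hi hi1
    tauto
  · rw [swapEntries_append_cons L R hm, stackSort_append_cons (forall_mem_swapEntries_lt hL hm)
      (forall_mem_swapEntries_lt hR hm), commL, commR, stackSort_append_cons hL hR]
    simp [swapEntries, show m ≠ i by omega, hm.ne']

def stackSortFiber (n : ℕ) (π : List ℕ) : Set (List ℕ) := {σ | IsPermList n σ ∧ stackSort σ = π}

section Fiber

variable {n i : ℕ} {π : List ℕ}

lemma toggleApplies_and_stackSort_swapEntries_of_mem_stackSortFiber (hi : i ∈ range' 1 n)
    (hi1 : i + 1 ∈ range' 1 n) (hT : ToggleApplies i π)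
    {σ : List ℕ} (hσ : σ ∈ stackSortFiber n π) :
    ToggleApplies i σ ∧ stackSort (swapEntries i σ) = swapEntries i π := by
  obtain ⟨hσ, rfl⟩ := hσ
  exact toggleApplies_and_stackSort_swapEntries (hσ.nodup_iff.2 nodup_range') (hσ.mem_iff.2 hi)
    (hσ.mem_iff.2 hi1) hT

lemma mapsTo_toggle_stackSortFiber (hi : i ∈ range' 1 n)
    (hi1 : i + 1 ∈ range' 1 n) (hT : ToggleApplies i π) :
    Set.MapsTo (toggle i) (stackSortFiber n π) (stackSortFiber n (swapEntries i π)) := by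
  intro σ hσ
  obtain ⟨hTσ, hs⟩ := toggleApplies_and_stackSort_swapEntries_of_mem_stackSortFiber hi hi1 hT hσ
  rw [toggle_of_toggleApplies hTσ]
  exact ⟨hσ.1.swapEntries hi hi1, hs⟩

lemma leftInvOn_toggle_stackSortFiber (hi : i ∈ range' 1 n)
    (hi1 : i + 1 ∈ range' 1 n) (hT : ToggleApplies i π) :
    Set.LeftInvOn (toggle i) (toggle i) (stackSortFiber n π) :=
  fun _ hσ => toggle_toggle_of_toggleApplies
    (toggleApplies_and_stackSort_swapEntries_of_mem_stackSortFiber hi hi1 hT hσ).1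

end Fiber

theorem toggle_bijOn_preimages_general (n i : ℕ) (hi₁ : 1 ≤ i) (hi₂ : i ≤ n - 1)
    (π π' : List ℕ) (h₁ : π' = toggle i π) (h₂ : π' = swapEntries i π) (h₃ : π' ≠ π) :
    Set.BijOn (toggle i) {σ : List ℕ | IsPermList n σ ∧ stackSort σ = π}
        {σ : List ℕ | IsPermList n σ ∧ stackSort σ = π'} ∧
      Nat.card {σ : List ℕ // IsPermList n σ ∧ stackSort σ = π} =
        Nat.card {σ : List ℕ // IsPermList n σ ∧ stackSort σ = π'} := by
  have hi : i ∈ range' 1 n := mem_range'_1.2 (by omega)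
  have hi1 : i + 1 ∈ range' 1 n := mem_range'_1.2 (by omega)
  have hT : ToggleApplies i π := by
    by_contra h
    exact h₃ (by rw [h₁, toggle, if_neg h])
  have hT' : ToggleApplies i π' := h₂ ▸ hT.swapEntries
  have hπ : swapEntries i π' = π := by rw [h₂, swapEntries_swapEntries]
  have hbij : Set.BijOn (toggle i) (stackSortFiber n π) (stackSortFiber n π') :=
    Set.InvOn.bijOn
      ⟨leftInvOn_toggle_stackSortFiber hi hi1 hT, leftInvOn_toggle_stackSortFiber hi hi1 hT'⟩
      (h₂ ▸ mapsTo_toggle_stackSortFiber hi hi1 hT) (hπ ▸ mapsTo_toggle_stackSortFiber hi hi1 hT')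
  exact ⟨hbij, Nat.card_congr (hbij.equiv _)⟩

/-- If `π' = p i (π) = swapᵢ(π) ≠ π`, then `p i` restricts to a bijection from
`s⁻¹(π)` onto `s⁻¹(π')`; in particular the fertilities agree. -/
theorem toggle_bijOn_preimages (n i : ℕ) (hi₁ : 1 ≤ i) (hi₂ : i ≤ n - 1)
    (π π' : List ℕ) (hπ : IsPermList n π) (hπ' : IsPermList n π')
    (h₁ : π' = toggle i π) (h₂ : π' = swapEntries i π) (h₃ : π' ≠ π) :
    Set.BijOn (toggle i) {σ : List ℕ | IsPermList n σ ∧ stackSort σ = π}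
        {σ : List ℕ | IsPermList n σ ∧ stackSort σ = π'} ∧
      Nat.card {σ : List ℕ // IsPermList n σ ∧ stackSort σ = π} =
        Nat.card {σ : List ℕ // IsPermList n σ ∧ stackSort σ = π'} :=
  toggle_bijOn_preimages_general n i hi₁ hi₂ π π' h₁ h₂ h₃
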